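/- arXiv:2305.13457 — 6 statements merged into one kernel-verified Lean document; each statement's English description precedes it below -/
import Mathlib

section
/- With f(t) = t·P₂(T) + T·P₂(φ₀) − T·P₂(t + φ₀), where p is T-periodic with vanishing average and |P₁| ≤ M, one has |f(t)| ≤ 2·T²·M for all t ∈ ℝ. -/
open MeasureTheory intervalIntegral

theorem f_global_bound
    (T : ℝ) (hT : 0 < T) (φ₀ M : ℝ) (p : ℝ → ℝ)
    (hper : ∀ t, p (t + T) = p t)
    (hloc : LocallyIntegrable p volume)
    (havg : (∫ s in (0:ℝ)..T, p s) = 0)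
    (P₁ P₂ f : ℝ → ℝ)
    (hP₁ : ∀ t, P₁ t = ∫ s in (0:ℝ)..t, p s)
    (hP₂ : ∀ t, P₂ t = ∫ s in (0:ℝ)..t, P₁ s)
    (hM : ∀ s, |P₁ s| ≤ M)
    (hf : ∀ t, f t = t * P₂ T + T * P₂ φ₀ - T * P₂ (t + φ₀)) :
    ∀ t, |f t| ≤ 2 * T ^ 2 * M := by
  have hM0 : 0 ≤ M := le_trans (abs_nonneg _) (hM 0)
  have hint : ∀ a b : ℝ, IntervalIntegrable p volume a b := fun a b =>
    (hloc.integrableOn_isCompact isCompact_uIcc).intervalIntegrable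
  have hP₁cont : Continuous P₁ := by
    have : Continuous fun t : ℝ => ∫ s in (0:ℝ)..t, p s :=
      intervalIntegral.continuous_primitive hint 0
    convert this using 1
    funext t; exact hP₁ t
  have hint₁ : ∀ a b : ℝ, IntervalIntegrable P₁ volume a b := fun a b =>
    hP₁cont.intervalIntegrable a b
  have hpper : Function.Periodic p T := hper
  have hP₁per : ∀ t, P₁ (t + T) = P₁ t := by
    intro t
    rw [hP₁, hP₁]
    have h1 : (∫ s in (0:ℝ)..t, p s) + (∫ s in t..(t+T), p s)
        = ∫ s in (0:ℝ)..(t+T), p s :=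
      intervalIntegral.integral_add_adjacent_intervals (hint 0 t) (hint t (t+T))
    have h2 : (∫ s in t..(t+T), p s) = ∫ s in (0:ℝ)..(0+T), p s :=
      hpper.intervalIntegral_add_eq t 0
    rw [zero_add, havg] at h2
    linarith
  have hP₂add : ∀ x : ℝ, P₂ (x + T) = P₂ x + P₂ T := by
    intro x
    rw [hP₂, hP₂, hP₂]
    have h1 : (∫ s in (0:ℝ)..x, P₁ s) + (∫ s in x..(x+T), P₁ s)
        = ∫ s in (0:ℝ)..(x+T), P₁ s :=
      intervalIntegral.integral_add_adjacent_intervals (hint₁ 0 x) (hint₁ x (x+T))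
    have h2 : (∫ s in x..(x+T), P₁ s) = ∫ s in (0:ℝ)..(0+T), P₁ s :=
      Function.Periodic.intervalIntegral_add_eq (f := P₁) hP₁per x 0
    rw [zero_add] at h2
    linarith
  have hfper : Function.Periodic f T := by
    intro t
    rw [hf, hf]
    have h : t + T + φ₀ = (t + φ₀) + T := by ring
    rw [h, hP₂add]
    ring
  -- bound on [0, T)
  have hbT : |P₂ T| ≤ T * M := by
    rw [hP₂]
    have := intervalIntegral.norm_integral_le_of_norm_le_const
      (C := M) (f := P₁) (a := (0:ℝ)) (b := T)
      (fun x _ => by rw [Real.norm_eq_abs]; exact hM x)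
    rw [Real.norm_eq_abs] at this
    simpa [abs_of_pos hT, mul_comm] using this
  intro t
  obtain ⟨y, hy, heq⟩ := hfper.exists_mem_Ico₀ hT t
  rw [heq, hf]
  have hdiff : P₂ (y + φ₀) - P₂ φ₀ = ∫ s in φ₀..(y+φ₀), P₁ s := by
    have h1 : (∫ s in (0:ℝ)..φ₀, P₁ s) + (∫ s in φ₀..(y+φ₀), P₁ s)
        = ∫ s in (0:ℝ)..(y+φ₀), P₁ s :=
      intervalIntegral.integral_add_adjacent_intervals (hint₁ 0 φ₀) (hint₁ φ₀ (y+φ₀))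
    rw [hP₂, hP₂]
    linarith
  have hbd : |P₂ (y + φ₀) - P₂ φ₀| ≤ y * M := by
    rw [hdiff]
    have := intervalIntegral.norm_integral_le_of_norm_le_const
      (C := M) (f := P₁) (a := φ₀) (b := y + φ₀)
      (fun x _ => by rw [Real.norm_eq_abs]; exact hM x)
    rw [Real.norm_eq_abs] at this
    have h2 : |y + φ₀ - φ₀| = y := by
      rw [show y + φ₀ - φ₀ = y by ring]; exact abs_of_nonneg hy.1
    rw [h2] at this
    linarith
  have hb1 := abs_le.mp hbT
  have hb2 := abs_le.mp hbd
  have hyT : y ≤ T := hy.2.le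
  have hy0 : 0 ≤ y := hy.1
  rw [abs_le]
  constructor <;> nlinarith [mul_nonneg hy0 hM0, mul_le_mul_of_nonneg_left hyT hM0,
    mul_nonneg hT.le hM0]
end

section
/- If p is T-periodic with ∫₀ᵀ p = 0 and ess-sup |p| < M, then for every φ₀ ∈ ℝ, |P₁(φ₀) − P₂(T)/T| < M·T/4. In particular, |T·P₁(φ₀) − P₂(T)| < n·T²/2 for every natural number n ≥ M. -/
open MeasureTheory intervalIntegral

theorem cond1_from_Linfty_bound
    (T : ℝ) (hT : 0 < T) (M : ℝ) (p : ℝ → ℝ)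
    (hper : ∀ t, p (t + T) = p t)
    (hloc : LocallyIntegrable p volume)
    (havg : (∫ s in (0:ℝ)..T, p s) = 0)
    (hM : ∀ᵐ t ∂volume, |p t| < M)
    (P₁ P₂ : ℝ → ℝ)
    (hP₁ : ∀ t, P₁ t = ∫ s in (0:ℝ)..t, p s)
    (hP₂ : ∀ t, P₂ t = ∫ s in (0:ℝ)..t, P₁ s) :
    ∀ φ₀ : ℝ, |P₁ φ₀ - P₂ T / T| < M * T / 4 ∧
      ∀ n : ℕ, M ≤ n → |T * P₁ φ₀ - P₂ T| < n * T ^ 2 / 2 := by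
  have hint : ∀ a b : ℝ, IntervalIntegrable p volume a b := fun a b =>
    intervalIntegrable_iff.mpr
      ((hloc.integrableOn_isCompact isCompact_uIcc).mono_set Set.uIoc_subset_uIcc)
  have hMpos : 0 < M := by
    obtain ⟨t, ht⟩ := hM.exists
    exact lt_of_le_of_lt (abs_nonneg _) ht
  -- strict bound on integrals of p
  have hstrict : ∀ a b : ℝ, a < b → |∫ s in a..b, p s| < M * (b - a) := by
    intro a b hab
    have h1 : |∫ s in a..b, p s| ≤ ∫ s in a..b, |p s| :=
      intervalIntegral.abs_integral_le_integral_abs hab.le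
    have h2 : (∫ s in a..b, |p s|) < ∫ s in a..b, M := by
      apply integral_lt_integral_of_ae_le_of_measure_setOf_lt_ne_zero hab.le
        (hint a b).abs intervalIntegrable_const
      · exact ae_restrict_of_ae (hM.mono fun t ht => ht.le)
      · intro h0
        have hc : (volume.restrict (Set.Ioc a b)) {x | ¬ |p x| < M} = 0 :=
          ae_iff.mp (ae_restrict_of_ae hM)
        have hle : (volume.restrict (Set.Ioc a b)) Set.univ ≤
            (volume.restrict (Set.Ioc a b)) {x | |p x| < M} +
            (volume.restrict (Set.Ioc a b)) {x | ¬ |p x| < M} := by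
          refine le_trans (measure_mono ?_) (measure_union_le _ _)
          intro x _
          by_cases hx : |p x| < M
          · exact Or.inl hx
          · exact Or.inr hx
        rw [h0, hc, add_zero] at hle
        rw [Measure.restrict_apply_univ, Real.volume_Ioc] at hle
        simp only [nonpos_iff_eq_zero, ENNReal.ofReal_eq_zero] at hle
        linarith
    rw [intervalIntegral.integral_const, smul_eq_mul] at h2
    calc |∫ s in a..b, p s| ≤ ∫ s in a..b, |p s| := h1
      _ < (b - a) * M := h2
      _ = M * (b - a) := mul_comm _ _
  have hweak : ∀ a b : ℝ, a ≤ b → |∫ s in a..b, p s| ≤ M * (b - a) := by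
    intro a b hab
    rcases eq_or_lt_of_le hab with h | h
    · subst h; simp
    · exact (hstrict a b h).le
  -- continuity of P₁
  have hP₁eq : P₁ = fun t => ∫ s in (0:ℝ)..t, p s := funext hP₁
  have hP₁cont : Continuous P₁ := by
    rw [hP₁eq]; exact intervalIntegral.continuous_primitive hint 0
  have hdiff : ∀ a b : ℝ, P₁ b - P₁ a = ∫ s in a..b, p s := by
    intro a b
    rw [hP₁, hP₁, ← intervalIntegral.integral_add_adjacent_intervals (hint 0 a) (hint a b)]
    ring
  have hP₁T : P₁ T = 0 := by rw [hP₁ T]; exact havg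
  -- key pointwise strict bound, for φ ∈ [0,T)
  have key : ∀ φ : ℝ, 0 ≤ φ → φ < T → ∀ t : ℝ, 0 ≤ t → t ≤ T → t ≠ φ → t ≠ T →
      |P₁ φ - P₁ t| < M * min |φ - t| (T - |φ - t|) := by
    intro φ hφ0 hφT t ht0 htT htφ htT'
    have htT2 : t < T := lt_of_le_of_ne htT htT'
    have hsum1 : (∫ s in (0:ℝ)..t, p s) + (∫ s in t..T, p s) = 0 := by
      rw [intervalIntegral.integral_add_adjacent_intervals (hint 0 t) (hint t T)]; exact havg
    have hsum2 : (∫ s in (0:ℝ)..φ, p s) + (∫ s in φ..T, p s) = 0 := by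
      rw [intervalIntegral.integral_add_adjacent_intervals (hint 0 φ) (hint φ T)]; exact havg
    rcases lt_or_gt_of_ne (Ne.symm htφ) with h | h
    · -- φ < t
      have habs : |φ - t| = t - φ := by rw [abs_sub_comm]; exact abs_of_pos (by linarith)
      have e1 : P₁ φ - P₁ t = -(∫ s in φ..t, p s) := by
        have := hdiff φ t; linarith
      have b1 : |∫ s in φ..t, p s| < M * (t - φ) := hstrict φ t h
      have hsplit : (∫ s in φ..t, p s) + (∫ s in t..T, p s) = ∫ s in φ..T, p s :=
        intervalIntegral.integral_add_adjacent_intervals (hint φ t) (hint t T)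
      have e2 : (∫ s in φ..t, p s) = -((∫ s in (0:ℝ)..φ, p s) + (∫ s in t..T, p s)) := by
        linarith
      have b2 : |∫ s in (0:ℝ)..φ, p s| ≤ M * φ := by
        have h := hweak 0 φ hφ0; rw [sub_zero] at h; exact h
      have b3 : |∫ s in t..T, p s| < M * (T - t) := hstrict t T htT2
      rw [mul_min_of_nonneg _ _ hMpos.le]
      refine lt_min ?_ ?_
      · rw [e1, abs_neg, habs]; exact b1

      · rw [e1, abs_neg, e2, abs_neg, habs]
        calc |(∫ s in (0:ℝ)..φ, p s) + (∫ s in t..T, p s)|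
            ≤ |∫ s in (0:ℝ)..φ, p s| + |∫ s in t..T, p s| := abs_add_le _ _
          _ < M * φ + M * (T - t) := by linarith
          _ = M * (T - (t - φ)) := by ring
    · -- t < φ
      have habs : |φ - t| = φ - t := abs_of_pos (by linarith)
      have e1 : P₁ φ - P₁ t = ∫ s in t..φ, p s := hdiff t φ
      have b1 : |∫ s in t..φ, p s| < M * (φ - t) := hstrict t φ h
      have hsplit : (∫ s in (0:ℝ)..t, p s) + (∫ s in t..φ, p s) = ∫ s in (0:ℝ)..φ, p s :=
        intervalIntegral.integral_add_adjacent_intervals (hint 0 t) (hint t φ)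
      have e2 : (∫ s in t..φ, p s) = -((∫ s in (0:ℝ)..t, p s) + (∫ s in φ..T, p s)) := by
        linarith
      have b2 : |∫ s in (0:ℝ)..t, p s| ≤ M * t := by
        have h := hweak 0 t ht0; rw [sub_zero] at h; exact h
      have b3 : |∫ s in φ..T, p s| < M * (T - φ) := hstrict φ T hφT
      rw [mul_min_of_nonneg _ _ hMpos.le]
      refine lt_min ?_ ?_
      · rw [e1, habs]; exact b1
      · rw [e1, e2, abs_neg, habs]
        calc |(∫ s in (0:ℝ)..t, p s) + (∫ s in φ..T, p s)|
            ≤ |∫ s in (0:ℝ)..t, p s| + |∫ s in φ..T, p s| := abs_add_le _ _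
          _ < M * t + M * (T - φ) := by linarith
          _ = M * (T - (φ - t)) := by ring
  -- weak pointwise bound at t = T
  have keyT : ∀ φ : ℝ, 0 ≤ φ → φ < T →
      |P₁ φ - P₁ T| ≤ M * min |φ - T| (T - |φ - T|) := by
    intro φ hφ0 hφT
    have hsum2 : (∫ s in (0:ℝ)..φ, p s) + (∫ s in φ..T, p s) = 0 := by
      rw [intervalIntegral.integral_add_adjacent_intervals (hint 0 φ) (hint φ T)]; exact havg
    have habs : |φ - T| = T - φ := by rw [abs_sub_comm]; exact abs_of_pos (by linarith)
    rw [hP₁T, sub_zero, habs, mul_min_of_nonneg _ _ hMpos.le]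
    refine le_min ?_ ?_
    · have e : P₁ φ = -(∫ s in φ..T, p s) := by
        have := hP₁ φ; linarith
      rw [e, abs_neg]
      exact hweak φ T hφT.le
    · have e : P₁ φ = ∫ s in (0:ℝ)..φ, p s := hP₁ φ
      rw [e]
      calc |∫ s in (0:ℝ)..φ, p s| ≤ M * (φ - 0) := hweak 0 φ hφ0
        _ = M * (T - (T - φ)) := by ring
  -- the basic integral computation
  have hmin_cont : Continuous fun u : ℝ => min u (T - u) :=
    continuous_id.min (continuous_const.sub continuous_id)
  have hFT : (∫ u in (0:ℝ)..T, min u (T - u)) = T ^ 2 / 4 := by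
    have i1 : (∫ u in (0:ℝ)..(T/2), min u (T - u)) = T ^ 2 / 8 := by
      have hc : (∫ u in (0:ℝ)..(T/2), min u (T - u)) = ∫ u in (0:ℝ)..(T/2), u := by
        apply intervalIntegral.integral_congr
        intro u hu
        rw [Set.uIcc_of_le (by linarith)] at hu
        exact min_eq_left (by obtain ⟨h1, h2⟩ := hu; linarith)
      rw [hc, integral_id]; ring
    have i2 : (∫ u in (T/2)..T, min u (T - u)) = T ^ 2 / 8 := by
      have h := intervalIntegral.integral_comp_sub_left
        (a := (0:ℝ)) (b := T/2) (fun u => min u (T - u)) T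
      simp only [sub_zero, sub_sub_cancel] at h
      have h2 : (∫ x in (0:ℝ)..(T/2), min (T - x) x) = ∫ x in (0:ℝ)..(T/2), min x (T - x) :=
        intervalIntegral.integral_congr fun u _ => min_comm _ _
      have h3 : T - T/2 = T/2 := by ring
      rw [h3] at h
      rw [← h, h2, i1]
    rw [← intervalIntegral.integral_add_adjacent_intervals
      (hmin_cont.intervalIntegrable 0 (T/2)) (hmin_cont.intervalIntegrable (T/2) T), i1, i2]
    ring
  have hFrev : ∀ x : ℝ, (∫ u in (T - x)..T, min u (T - u)) = ∫ u in (0:ℝ)..x, min u (T - u) := by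
    intro x
    have h := intervalIntegral.integral_comp_sub_left
      (a := (0:ℝ)) (b := x) (fun u => min u (T - u)) T
    simp only [sub_zero, sub_sub_cancel] at h
    rw [← h]
    exact intervalIntegral.integral_congr fun u _ => min_comm _ _
  have hFadd : ∀ x : ℝ, 0 ≤ x → x ≤ T →
      (∫ u in (0:ℝ)..(T - x), min u (T - u)) + (∫ u in (0:ℝ)..x, min u (T - u)) = T ^ 2 / 4 := by
    intro x _ _
    rw [← hFrev x,
      intervalIntegral.integral_add_adjacent_intervals
        (hmin_cont.intervalIntegrable 0 (T - x)) (hmin_cont.intervalIntegrable (T - x) T)]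
    exact hFT
  -- the kernel integral
  have hm_cont : Continuous fun u : ℝ => min |u| (T - |u|) :=
    continuous_abs.min (continuous_const.sub continuous_abs)
  have hg : ∀ φ : ℝ, 0 ≤ φ → φ < T →
      (∫ t in (0:ℝ)..T, M * min |φ - t| (T - |φ - t|)) = M * (T ^ 2 / 4) := by
    intro φ hφ0 hφT
    rw [intervalIntegral.integral_const_mul]
    congr 1
    have h1 := intervalIntegral.integral_comp_sub_left
      (a := (0:ℝ)) (b := T) (fun u => min |u| (T - |u|)) φ
    simp only [sub_zero] at h1
    rw [h1]
    have hsplit : (∫ u in (φ - T)..(0:ℝ), min |u| (T - |u|)) +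
        (∫ u in (0:ℝ)..φ, min |u| (T - |u|)) = ∫ u in (φ - T)..φ, min |u| (T - |u|) :=
      intervalIntegral.integral_add_adjacent_intervals
        (hm_cont.intervalIntegrable _ _) (hm_cont.intervalIntegrable _ _)
    rw [← hsplit]
    have hneg : (∫ u in (φ - T)..(0:ℝ), min |u| (T - |u|)) =
        ∫ u in (0:ℝ)..(T - φ), min |u| (T - |u|) := by
      have h := intervalIntegral.integral_comp_neg
        (a := (0:ℝ)) (b := T - φ) (fun u => min |u| (T - |u|))
      simp only [abs_neg, neg_zero] at h
      rw [show φ - T = -(T - φ) by ring]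
      exact h.symm
    rw [hneg]
    have habs1 : (∫ u in (0:ℝ)..(T - φ), min |u| (T - |u|)) =
        ∫ u in (0:ℝ)..(T - φ), min u (T - u) := by
      apply intervalIntegral.integral_congr
      intro u hu
      rw [Set.uIcc_of_le (by linarith)] at hu
      show min |u| (T - |u|) = min u (T - u)
      rw [abs_of_nonneg hu.1]
    have habs2 : (∫ u in (0:ℝ)..φ, min |u| (T - |u|)) =
        ∫ u in (0:ℝ)..φ, min u (T - u) := by
      apply intervalIntegral.integral_congr
      intro u hu
      rw [Set.uIcc_of_le (by linarith)] at hu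
      show min |u| (T - |u|) = min u (T - u)
      rw [abs_of_nonneg hu.1]
    rw [habs1, habs2]
    exact hFadd φ hφ0 hφT.le
  -- the main strict bound for φ ∈ [0,T)
  have hmain : ∀ φ : ℝ, 0 ≤ φ → φ < T → |T * P₁ φ - P₂ T| < M * T ^ 2 / 4 := by
    intro φ hφ0 hφT
    have hP₁int : IntervalIntegrable P₁ volume 0 T := hP₁cont.intervalIntegrable 0 T
    have e1 : T * P₁ φ - P₂ T = ∫ t in (0:ℝ)..T, (P₁ φ - P₁ t) := by
      rw [hP₂, intervalIntegral.integral_sub (intervalIntegrable_const) hP₁int,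
        intervalIntegral.integral_const, smul_eq_mul]
      ring
    have e2 : |∫ t in (0:ℝ)..T, (P₁ φ - P₁ t)| ≤ ∫ t in (0:ℝ)..T, |P₁ φ - P₁ t| :=
      intervalIntegral.abs_integral_le_integral_abs hT.le
    have e3 : (∫ t in (0:ℝ)..T, |P₁ φ - P₁ t|) <
        ∫ t in (0:ℝ)..T, M * min |φ - t| (T - |φ - t|) := by
      apply intervalIntegral.integral_lt_integral_of_continuousOn_of_le_of_exists_lt hT
      · exact ((continuous_const.sub hP₁cont).abs).continuousOn
      · exact (continuous_const.mul ((continuous_const.sub continuous_id).abs.min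
          (continuous_const.sub (continuous_const.sub continuous_id).abs))).continuousOn
      · intro x hx
        by_cases hxφ : x = φ
        · subst hxφ
          simp [sub_self, abs_zero, hT.le]
        · by_cases hxT : x = T
          · subst hxT
            exact keyT φ hφ0 hφT
          · exact (key φ hφ0 hφT x hx.1.le hx.2 hxφ hxT).le
      · by_cases hφz : φ = 0
        · refine ⟨T/2, ⟨by linarith, by linarith⟩, ?_⟩
          exact key φ hφ0 hφT (T/2) (by linarith) (by linarith)
            (by rw [hφz]; intro h; linarith) (by intro h; linarith)
        · have hφpos : 0 < φ := lt_of_le_of_ne hφ0 (Ne.symm hφz)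
          refine ⟨φ/2, ⟨by linarith, by linarith⟩, ?_⟩
          exact key φ hφ0 hφT (φ/2) (by linarith) (by linarith)
            (by intro h; linarith) (by intro h; linarith)
    calc |T * P₁ φ - P₂ T| = |∫ t in (0:ℝ)..T, (P₁ φ - P₁ t)| := by rw [e1]
      _ ≤ ∫ t in (0:ℝ)..T, |P₁ φ - P₁ t| := e2
      _ < ∫ t in (0:ℝ)..T, M * min |φ - t| (T - |φ - t|) := e3
      _ = M * (T ^ 2 / 4) := hg φ hφ0 hφT
      _ = M * T ^ 2 / 4 := by ring
  -- reduce general φ₀ to [0,T)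
  intro φ₀
  have hperP : Function.Periodic P₁ T := by
    intro x
    have h0 : (∫ s in x..(x + T), p s) = ∫ s in (0:ℝ)..(0 + T), p s :=
      (Function.Periodic.intervalIntegral_add_eq (hper : Function.Periodic p T) x 0)
    have hd := hdiff x (x + T)
    rw [h0, zero_add, havg] at hd
    linarith
  set k : ℤ := ⌊φ₀ / T⌋ with hk
  set φ : ℝ := φ₀ - k * T with hφdef
  have hφeq : P₁ φ = P₁ φ₀ := hperP.sub_int_mul_eq k
  have hfr : φ = T * Int.fract (φ₀ / T) := by
    rw [hφdef, Int.fract]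
    field_simp
    ring
  have hφ0 : 0 ≤ φ := by
    rw [hfr]
    exact mul_nonneg hT.le (Int.fract_nonneg _)
  have hφT : φ < T := by
    rw [hfr]
    calc T * Int.fract (φ₀ / T) < T * 1 := by
          exact (mul_lt_mul_iff_right₀ hT).mpr (Int.fract_lt_one _)
      _ = T := mul_one T
  have hbound : |T * P₁ φ₀ - P₂ T| < M * T ^ 2 / 4 := by
    rw [← hφeq]
    exact hmain φ hφ0 hφT
  constructor
  · have e : P₁ φ₀ - P₂ T / T = (T * P₁ φ₀ - P₂ T) / T := by field_simp
    rw [e, abs_div, abs_of_pos hT, div_lt_iff₀ hT]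
    calc |T * P₁ φ₀ - P₂ T| < M * T ^ 2 / 4 := hbound
      _ = M * T / 4 * T := by ring
  · intro n hn
    calc |T * P₁ φ₀ - P₂ T| < M * T ^ 2 / 4 := hbound
      _ ≤ n * T ^ 2 / 2 := by nlinarith [sq_nonneg T, hMpos]
end

section
/- Suppose f : ℝ → ℝ is continuous and T-periodic, hₙ(t) = (T/2)·t·(nT − t), and there exists n* ∈ ℕ such that |f(t)| < h_{n*}(t) for all t ∈ (0, n*·T). Then |f(t)| < h_{n*+1}(t) for all t ∈ (0, (n*+1)·T). -/
theorem claim2_inductive_step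
    (T : ℝ) (hT : 0 < T) (f : ℝ → ℝ)
    (hcont : Continuous f)
    (hper : ∀ t, f (t + T) = f t)
    (h : ℕ → ℝ → ℝ)
    (hh : ∀ (n : ℕ) (t : ℝ), h n t = (T / 2) * t * (n * T - t))
    (nstar : ℕ) (hn1 : 1 ≤ nstar)
    (hyp : ∀ t, 0 < t → t < nstar * T → |f t| < h nstar t) :
    ∀ t, 0 < t → t < (nstar + 1) * T → |f t| < h (nstar + 1) t := by
  have hnR : (1 : ℝ) ≤ (nstar : ℝ) := by exact_mod_cast hn1
  have hnT : T ≤ (nstar : ℝ) * T := by nlinarith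
  -- f 0 = 0
  have hf0 : f 0 = 0 := by
    have h1 : Filter.Tendsto (fun t => |f t|) (nhdsWithin 0 (Set.Ioi 0)) (nhds |f 0|) :=
      ((hcont.abs).tendsto 0).mono_left nhdsWithin_le_nhds
    have h2 : Filter.Tendsto (fun t : ℝ => (T / 2) * t * ((nstar : ℝ) * T - t))
        (nhdsWithin 0 (Set.Ioi 0)) (nhds 0) := by
      have hc : Continuous (fun t : ℝ => (T / 2) * t * ((nstar : ℝ) * T - t)) := by
        continuity
      have := (hc.tendsto 0).mono_left (nhdsWithin_le_nhds (s := Set.Ioi (0:ℝ)))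
      simpa using this
    have hev : ∀ᶠ t in nhdsWithin (0:ℝ) (Set.Ioi 0),
        |f t| ≤ (T / 2) * t * ((nstar : ℝ) * T - t) := by
      have hmem : Set.Ioo (0:ℝ) ((nstar : ℝ) * T) ∈ nhdsWithin (0:ℝ) (Set.Ioi 0) :=
        Ioo_mem_nhdsGT_of_mem ⟨le_refl 0, by linarith⟩
      filter_upwards [hmem] with t ht
      have := hyp t ht.1 ht.2
      rw [hh] at this
      linarith
    have hbot : (nhdsWithin (0:ℝ) (Set.Ioi 0)).NeBot := by
      exact nhdsGT_neBot 0
    have hle : |f 0| ≤ 0 := le_of_tendsto_of_tendsto h1 h2 hev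
    have := abs_nonneg (f 0)
    have : |f 0| = 0 := le_antisymm hle this
    exact abs_eq_zero.mp this
  intro t ht ht2
  by_cases hcase : t < nstar * T
  · have h1 := hyp t ht hcase
    have h2 : h nstar t ≤ h (nstar + 1) t := by
      rw [hh, hh]; push_cast; nlinarith [mul_pos (mul_pos (half_pos hT) ht) hT]
    linarith
  · push_neg at hcase
    by_cases hTt : t = T
    · -- t = T, f T = f 0 = 0
      have hfT : f T = 0 := by
        have := hper 0
        simpa [hf0] using this
      rw [hh, hTt, hfT]
      push_cast
      simp only [abs_zero]
      nlinarith [mul_pos (mul_pos (half_pos hT) hT) (lt_of_lt_of_le hT hnT)]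
    · have htT : T < t := lt_of_le_of_ne (le_trans hnT hcase) (Ne.symm hTt)
      have hs : f t = f (t - T) := by
        have := hper (t - T)
        rw [show t - T + T = t by ring] at this
        exact this

      have hs1 : 0 < t - T := by linarith
      have hs2 : t - T < nstar * T := by
        linarith
      have h1 := hyp (t - T) hs1 hs2
      rw [hh] at h1
      rw [hh]
      push_cast at h1 ⊢
      rw [hs]
      nlinarith [mul_pos (mul_pos (half_pos hT) hT) (show (0:ℝ) < (↑nstar+1)*T - t by linarith)]
end

section
/- Let f : ℝ → ℝ be continuously differentiable and T-periodic with f(0) = 0, and suppose |f(t)| ≤ C·t for all t ≥ 0 (some C > 0) and |f| ≤ B globally. Then there exists n* ∈ ℕ such that |f(t)| < (T/2)·t·(n*T − t) for all t ∈ (0, n*T). -/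
/-!
A `C¹` periodic function has a continuous periodic, hence bounded, derivative, so it is
`K`-Lipschitz for some `K`. Since `f` vanishes at `0` and at `n T`, on `(0, n T)` it is bounded by
`K · min (t, n T - t)`, while `t (n T - t) ≥ (n T / 2) · min (t, n T - t)`; so any `n` with
`4 K < n T²` works.
-/

open Function

theorem Function.Periodic.deriv {E : Type*} [NormedAddCommGroup E] [NormedSpace ℝ E]
    {f : ℝ → E} {c : ℝ} (hf : Periodic f c) : Periodic (deriv f) c := fun x => by
  rw [← deriv_comp_add_const, show (fun y => f (y + c)) = f from funext hf]

theorem Function.Periodic.exists_lipschitzWith {E : Type*} [NormedAddCommGroup E]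
    [NormedSpace ℝ E] {f : ℝ → E} {c : ℝ} (hp : Periodic f c) (hc : c ≠ 0)
    (hf : ContDiff ℝ 1 f) : ∃ K, LipschitzWith K f := by
  obtain ⟨K, hK⟩ :=
    (hp.deriv.isBounded_of_continuous hc (hf.continuous_deriv le_rfl)).exists_norm_le
  refine ⟨K.toNNReal, lipschitzWith_of_nnnorm_deriv_le (hf.differentiable one_ne_zero) fun x => ?_⟩
  rw [← NNReal.coe_le_coe, coe_nnnorm]
  exact (hK _ (Set.mem_range_self x)).trans (Real.le_coe_toNNReal K)

theorem LipschitzWith.norm_le_mul_min {E : Type*} [SeminormedAddCommGroup E] {f : ℝ → E}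
    {K : NNReal} (hf : LipschitzWith K f) {a t : ℝ} (h0 : f 0 = 0) (ha : f a = 0)
    (ht : 0 ≤ t) (hta : t ≤ a) : ‖f t‖ ≤ K * min t (a - t) := by
  have hleft : ‖f t‖ ≤ K * t := by
    simpa [h0, abs_of_nonneg ht] using hf.dist_le_mul t 0
  have hright : ‖f t‖ ≤ K * (a - t) := by
    simpa [ha, Real.dist_eq, abs_of_nonpos (sub_nonpos.2 hta)] using hf.dist_le_mul t a
  rw [mul_min_of_nonneg _ _ K.coe_nonneg]
  exact le_min hleft hright

theorem half_mul_min_le_mul_sub {a t : ℝ} (ht : 0 ≤ t) (hta : t ≤ a) :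
    a / 2 * min t (a - t) ≤ t * (a - t) := by
  have hmax : a / 2 ≤ max t (a - t) := by
    rcases le_total t (a - t) with h | h
    · rw [max_eq_right h]; linarith
    · rw [max_eq_left h]; linarith
  rw [← min_mul_max t (a - t), mul_comm (a / 2)]
  exact mul_le_mul_of_nonneg_left hmax (le_min ht (sub_nonneg.2 hta))

theorem claim1_existence_of_nstar_general
    (T : ℝ) (hT : 0 < T) (f : ℝ → ℝ)
    (hC1 : ContDiff ℝ 1 f)
    (hper : ∀ t, f (t + T) = f t)
    (hf0 : f 0 = 0) :
    ∃ nstar : ℕ, 0 < nstar ∧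
      ∀ t, 0 < t → t < nstar * T → |f t| < (T / 2) * t * (nstar * T - t) := by
  have hperiodic : Periodic f T := hper
  obtain ⟨K, hK⟩ := hperiodic.exists_lipschitzWith hT.ne' hC1
  obtain ⟨n, hn⟩ := exists_nat_gt (4 * K / T ^ 2)
  have hKn : 4 * K < n * T ^ 2 := (div_lt_iff₀ (by positivity)).1 hn
  refine ⟨n, Nat.cast_pos.1 ((by positivity : (0 : ℝ) ≤ 4 * K / T ^ 2).trans_lt hn),
    fun t ht htn => ?_⟩
  have hzero : f (n * T) = 0 := by rw [hperiodic.nat_mul_eq, hf0]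
  have hmin : 0 < min t (n * T - t) := lt_min ht (sub_pos.2 htn)
  calc |f t| ≤ K * min t (n * T - t) := hK.norm_le_mul_min hf0 hzero ht.le htn.le
    _ < n * T ^ 2 / 4 * min t (n * T - t) := by gcongr; linarith
    _ = T / 2 * (n * T / 2 * min t (n * T - t)) := by ring
    _ ≤ T / 2 * (t * (n * T - t)) :=
      mul_le_mul_of_nonneg_left (half_mul_min_le_mul_sub ht.le htn.le) (by positivity)
    _ = T / 2 * t * (n * T - t) := by ring

theorem claim1_existence_of_nstar
    (T : ℝ) (hT : 0 < T) (f : ℝ → ℝ)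
    (hC1 : ContDiff ℝ 1 f)
    (hper : ∀ t, f (t + T) = f t)
    (hf0 : f 0 = 0)
    (C : ℝ) (hC : 0 < C)
    (hlin : ∀ t, 0 ≤ t → |f t| ≤ C * t)
    (B : ℝ) (hB : ∀ t, |f t| ≤ B) :
    ∃ nstar : ℕ, 0 < nstar ∧
      ∀ t, 0 < t → t < nstar * T → |f t| < (T / 2) * t * (nstar * T - t) :=
  claim1_existence_of_nstar_general T hT f hC1 hper hf0
end

section
/- Let p be T-periodic with ∫₀ᵀ p = 0 and ess-sup |p| < M, and let n ∈ ℕ with n ≥ M. Define f(t) = t·P₂(T) + T·P₂(φ₀) − T·P₂(t + φ₀) and dₙ(t) = (n·T²/4)·t. Then f(t) < dₙ(t) for all t > 0. -/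
/-!
`f` is the primitive of `u ↦ P₂(T) - T·P₁(u + φ₀)` vanishing at `0`, so it suffices to bound this
integrand by `M·T²/4`. Since `∫ p = 0` over a period, `P₁` is `T`-periodic, and
`P₂(T) - T·P₁(x) = ∫ₓ^{x+T} (P₁(s) - P₁(x)) ds`. The integrand of the latter is below `M·(s - x)`
on the first half-period and, by periodicity, below `M·(x + T - s)` on the second, and the tent
`M·min(s - x, x + T - s)` has integral `M·T²/4`.
-/

open MeasureTheory intervalIntegral Set Function

theorem intervalIntegral_lt_mul_sub_of_ae_lt {p : ℝ → ℝ} {M a b : ℝ} (hab : a < b)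
    (hp : IntervalIntegrable p volume a b) (hM : ∀ᵐ t, p t < M) :
    ∫ s in a..b, p s < M * (b - a) :=
  calc ∫ s in a..b, p s < ∫ _ in a..b, M := by
        refine integral_lt_integral_of_ae_le_of_measure_setOfPred_lt_ne_zero hab.le hp
          intervalIntegrable_const (ae_restrict_of_ae (hM.mono fun t ht => ht.le)) ?_
        rw [measure_congr (ae_eq_univ.2 (ae_restrict_of_ae hM)), Measure.restrict_apply_univ]
        simp [hab]
    _ = M * (b - a) := by simp [mul_comm]

theorem integral_lt_integral_of_continuousOn_of_lt_on_Ioo {f g : ℝ → ℝ} {a b : ℝ} (hab : a < b)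
    (hf : ContinuousOn f (Icc a b)) (hg : ContinuousOn g (Icc a b))
    (hlt : ∀ x ∈ Ioo a b, f x < g x) :
    ∫ x in a..b, f x < ∫ x in a..b, g x := by
  rw [← sub_pos, ← integral_sub (hg.intervalIntegrable_of_Icc hab.le)
    (hf.intervalIntegrable_of_Icc hab.le)]
  exact intervalIntegral_pos_of_pos_on ((hg.sub hf).intervalIntegrable_of_Icc hab.le)
    (fun x hx => sub_pos.2 (hlt x hx)) hab

theorem abs_primitive_sub_lt {p : ℝ → ℝ} {M r s : ℝ} (hp : LocallyIntegrable p volume)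
    (hM : ∀ᵐ t, |p t| < M) (hrs : r < s) :
    |(∫ u in 0..s, p u) - ∫ u in 0..r, p u| < M * (s - r) := by
  have hpi : ∀ a b : ℝ, IntervalIntegrable p volume a b := fun a b =>
    (hp.integrableOn_isCompact isCompact_uIcc).intervalIntegrable
  rw [integral_interval_sub_left (hpi 0 s) (hpi 0 r), abs_lt]
  constructor
  · have := intervalIntegral_lt_mul_sub_of_ae_lt (p := fun t => -p t) hrs (hpi r s).neg
      (hM.mono fun t ht => neg_lt.1 (abs_lt.1 ht).1)
    rw [intervalIntegral.integral_neg] at this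
    linarith
  · exact intervalIntegral_lt_mul_sub_of_ae_lt hrs (hpi r s)
      (hM.mono fun t ht => (abs_lt.1 ht).2)

theorem Function.Periodic.periodic_primitive_of_integral_eq_zero {p : ℝ → ℝ} {T : ℝ}
    (hper : Periodic p T)
    (hp : ∀ a b, IntervalIntegrable p volume a b) (havg : ∫ s in 0..T, p s = 0) :
    Periodic (fun t => ∫ s in 0..t, p s) T := fun t => by
  simp only [hper.intervalIntegral_add_eq_add 0 t hp, zero_add, havg, add_zero]

theorem Function.Periodic.integral_sub_mul_lt {g : ℝ → ℝ} {T M : ℝ} (hT : 0 < T)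
    (hg : Continuous g) (hper : Periodic g T)
    (hlip : ∀ r s, r < s → |g s - g r| < M * (s - r)) (x : ℝ) :
    (∫ s in 0..T, g s) - T * g x < M * T ^ 2 / 4 := by
  have hgx : Continuous fun s => g s - g x := hg.sub continuous_const
  have left : ∫ s in x..x + T / 2, (g s - g x) < ∫ s in x..x + T / 2, M * (s - x) :=
    integral_lt_integral_of_continuousOn_of_lt_on_Ioo (by linarith) hgx.continuousOn
      (by fun_prop) fun s hs => (abs_lt.1 (hlip x s hs.1)).2
  have right :
      ∫ s in x + T / 2..x + T, (g s - g x) < ∫ s in x + T / 2..x + T, M * (x + T - s) := by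
    refine integral_lt_integral_of_continuousOn_of_lt_on_Ioo (by linarith) hgx.continuousOn
      (by fun_prop) fun s hs => ?_
    have := (abs_lt.1 (hlip s (x + T) hs.2)).1
    rw [hper x] at this
    linarith
  have hleft : ∫ s in x..x + T / 2, M * (s - x) = M * T ^ 2 / 8 := by
    rw [intervalIntegral.integral_const_mul, integral_comp_sub_right (fun s => s), integral_id]
    ring
  have hright : ∫ s in x + T / 2..x + T, M * (x + T - s) = M * T ^ 2 / 8 := by
    rw [intervalIntegral.integral_const_mul, integral_comp_sub_left (fun s => s), integral_id]
    ring
  have hsplit : (∫ s in 0..T, g s) - T * g x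
      = (∫ s in x..x + T / 2, (g s - g x)) + ∫ s in x + T / 2..x + T, (g s - g x) := by
    rw [integral_add_adjacent_intervals (hgx.intervalIntegrable _ _)
      (hgx.intervalIntegrable _ _), integral_sub (hg.intervalIntegrable _ _)
      intervalIntegrable_const, hper.intervalIntegral_add_eq x 0, zero_add,
      intervalIntegral.integral_const, add_sub_cancel_left, smul_eq_mul]
  linarith

theorem integral_const_sub_mul_comp_add {g : ℝ → ℝ} (hg : Continuous g) (c T φ t : ℝ) :
    ∫ u in 0..t, (c - T * g (u + φ))
      = t * c + T * (∫ s in 0..φ, g s) - T * ∫ s in 0..t + φ, g s := by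
  have hgφ : Continuous fun u => T * g (u + φ) := by fun_prop
  rw [integral_sub intervalIntegrable_const (hgφ.intervalIntegrable _ _),
    intervalIntegral.integral_const, intervalIntegral.integral_const_mul,
    integral_comp_add_right, zero_add,
    ← integral_interval_sub_left (hg.intervalIntegrable 0 _) (hg.intervalIntegrable 0 _)]
  simp only [sub_zero, smul_eq_mul]
  ring

theorem f_lt_dn
    (T : ℝ) (hT : 0 < T) (M : ℝ) (φ₀ : ℝ) (p : ℝ → ℝ)
    (hper : ∀ t, p (t + T) = p t)
    (hloc : LocallyIntegrable p volume)
    (havg : (∫ s in (0:ℝ)..T, p s) = 0)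
    (hM : ∀ᵐ t ∂volume, |p t| < M)
    (P₁ P₂ f : ℝ → ℝ)
    (hP₁ : ∀ t, P₁ t = ∫ s in (0:ℝ)..t, p s)
    (hP₂ : ∀ t, P₂ t = ∫ s in (0:ℝ)..t, P₁ s)
    (hf : ∀ t, f t = t * P₂ T + T * P₂ φ₀ - T * P₂ (t + φ₀))
    (n : ℕ) (hn : M ≤ n) :
    ∀ t, 0 < t → f t < (n * T ^ 2 / 4) * t := by
  intro t ht
  have hpi : ∀ a b : ℝ, IntervalIntegrable p volume a b := fun a b =>
    (hloc.integrableOn_isCompact isCompact_uIcc).intervalIntegrable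
  obtain rfl : P₁ = fun t => ∫ s in 0..t, p s := funext hP₁
  have hcont : Continuous fun t => ∫ s in 0..t, p s := continuous_primitive hpi 0
  have hgap : ∀ x, P₂ T - T * ∫ s in 0..x, p s < n * T ^ 2 / 4 := fun x => by
    have := (Periodic.periodic_primitive_of_integral_eq_zero hper hpi havg).integral_sub_mul_lt
      hT hcont (fun r s hrs => abs_primitive_sub_lt hloc hM hrs) x
    have hMn : M * T ^ 2 / 4 ≤ n * T ^ 2 / 4 := by gcongr
    rw [← hP₂] at this
    linarith
  calc f t = ∫ u in 0..t, (P₂ T - T * ∫ s in 0..u + φ₀, p s) := by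
        rw [hf, hP₂ φ₀, hP₂ (t + φ₀), integral_const_sub_mul_comp_add hcont]
    _ < n * T ^ 2 / 4 * (t - 0) := intervalIntegral_lt_mul_sub_of_ae_lt ht
        ((continuous_const.sub (continuous_const.mul
          (hcont.comp (continuous_add_const φ₀)))).intervalIntegrable _ _)
        (Filter.Eventually.of_forall fun u => hgap (u + φ₀))
    _ = n * T ^ 2 / 4 * t := by rw [sub_zero]
end

section
/- Let p be T-periodic with ∫₀ᵀ p = 0 and ess-sup |p| < M, and let n ∈ ℕ with n ≥ M. Then for every φ₀ ∈ ℝ and t ∈ (0, nT), |t·P₂(T) + T·P₂(φ₀) − T·P₂(t + φ₀)| < (T/2)·t·(nT − t). -/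
open MeasureTheory intervalIntegral

set_option maxHeartbeats 1000000 in
theorem cond2_from_Linfty_bound
    (T : ℝ) (hT : 0 < T) (M : ℝ) (p : ℝ → ℝ)
    (hper : ∀ t, p (t + T) = p t)
    (hloc : LocallyIntegrable p volume)
    (havg : (∫ s in (0:ℝ)..T, p s) = 0)
    (hM : ∀ᵐ t ∂volume, |p t| < M)
    (P₁ P₂ : ℝ → ℝ)
    (hP₁ : ∀ t, P₁ t = ∫ s in (0:ℝ)..t, p s)
    (hP₂ : ∀ t, P₂ t = ∫ s in (0:ℝ)..t, P₁ s)
    (n : ℕ) (hn : M ≤ n) :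
    ∀ (φ₀ t : ℝ), 0 < t → t < n * T →
      |t * P₂ T + T * P₂ φ₀ - T * P₂ (t + φ₀)| < (T / 2) * t * (n * T - t) := by
  have hint : ∀ a b : ℝ, IntervalIntegrable p volume a b := fun a b =>
    (hloc.integrableOn_isCompact isCompact_uIcc).intervalIntegrable
  -- strict integral bound from the a.e. bound
  have hA : ∀ a b : ℝ, a < b → (∫ s in a..b, |p s|) < M * (b - a) := by
    intro a b hab
    have h1 : (∫ s in a..b, |p s|) < ∫ s in a..b, M := by
      refine integral_lt_integral_of_ae_le_of_measure_setOf_lt_ne_zero hab.le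
        (hint a b).abs intervalIntegrable_const
        (ae_restrict_of_ae (hM.mono fun x hx => hx.le)) ?_
      have h2 : volume.restrict (Set.Ioc a b) {x | |p x| < M}
          = volume.restrict (Set.Ioc a b) Set.univ :=
        measure_congr (MeasureTheory.ae_eq_univ.mpr (by
          rw [Set.compl_setOf]
          exact ae_iff.mp (ae_restrict_of_ae hM)))
      rw [h2, Measure.restrict_apply_univ]
      simp only [Real.volume_Ioc, ne_eq, ENNReal.ofReal_eq_zero, not_le]
      linarith
    simpa [intervalIntegral.integral_const, smul_eq_mul, mul_comm] using h1
  -- Lipschitz bounds for P₁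
  have hdiff : ∀ a b : ℝ, P₁ b - P₁ a = ∫ s in a..b, p s := by
    intro a b
    rw [hP₁, hP₁, integral_interval_sub_left (hint 0 b) (hint 0 a)]
  have hLipS : ∀ a b : ℝ, a < b → |P₁ b - P₁ a| < M * (b - a) := by
    intro a b hab
    rw [hdiff]
    exact lt_of_le_of_lt (intervalIntegral.abs_integral_le_integral_abs hab.le) (hA a b hab)
  have hLip : ∀ a b : ℝ, a ≤ b → |P₁ b - P₁ a| ≤ M * (b - a) := by
    intro a b hab
    rcases eq_or_lt_of_le hab with rfl | h
    · simp
    · exact (hLipS a b h).le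
  -- P₁ is continuous and periodic
  have hP₁c : Continuous P₁ := by
    have hP₁eq : P₁ = fun x => ∫ s in (0:ℝ)..x, p s := funext hP₁
    rw [hP₁eq]
    exact intervalIntegral.continuous_primitive hint 0
  have hpper : Function.Periodic p T := hper
  have hP₁per : Function.Periodic P₁ T := by
    intro t
    have h1 : P₁ (t + T) - P₁ t = ∫ s in t..(t + T), p s := hdiff t (t + T)
    rw [hpper.intervalIntegral_add_eq t 0, zero_add, havg] at h1
    linarith
  -- the key pointwise bound for τ ∈ [0, T)
  have hlin : ∀ c a b : ℝ, (∫ σ in a..b, M * (c - σ)) = M * (c * (b - a) - (b^2 - a^2) / 2) := by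
    intro c a b
    rw [intervalIntegral.integral_const_mul,
      intervalIntegral.integral_sub intervalIntegrable_const intervalIntegrable_id,
      integral_id, intervalIntegral.integral_const, smul_eq_mul]
    ring
  have hlin2 : ∀ c a b : ℝ, (∫ σ in a..b, M * (σ - c)) = M * ((b^2 - a^2) / 2 - c * (b - a)) := by
    intro c a b
    rw [intervalIntegral.integral_const_mul,
      intervalIntegral.integral_sub intervalIntegrable_id intervalIntegrable_const,
      integral_id, intervalIntegral.integral_const, smul_eq_mul]
    ring
  have hGτ : ∀ τ : ℝ, 0 ≤ τ → τ < T → |P₂ T - T * P₁ τ| < M * T^2 / 4 := by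
    intro τ h0 hτT
    have hc : Continuous fun σ => |P₁ σ - P₁ τ| := (hP₁c.sub continuous_const).abs
    have hii : ∀ a b : ℝ, IntervalIntegrable (fun σ => |P₁ σ - P₁ τ|) volume a b :=
      fun a b => hc.intervalIntegrable a b
    have hsub : P₂ T - T * P₁ τ = ∫ σ in (0:ℝ)..T, (P₁ σ - P₁ τ) := by
      rw [intervalIntegral.integral_sub (hP₁c.intervalIntegrable _ _) intervalIntegrable_const,
        intervalIntegral.integral_const, hP₂ T, smul_eq_mul]
      ring
    have habs : |P₂ T - T * P₁ τ| ≤ ∫ σ in (0:ℝ)..T, |P₁ σ - P₁ τ| := by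
      rw [hsub]
      exact intervalIntegral.abs_integral_le_integral_abs hT.le
    rcases le_or_gt τ (T / 2) with hcase | hcase
    · -- split at τ and τ + T/2
      have e1 : (∫ σ in (0:ℝ)..τ, |P₁ σ - P₁ τ|) + (∫ σ in τ..(τ + T/2), |P₁ σ - P₁ τ|)
          = ∫ σ in (0:ℝ)..(τ + T/2), |P₁ σ - P₁ τ| :=
        integral_add_adjacent_intervals (hii _ _) (hii _ _)
      have e2 : (∫ σ in (0:ℝ)..(τ + T/2), |P₁ σ - P₁ τ|) + (∫ σ in (τ + T/2)..T, |P₁ σ - P₁ τ|)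
          = ∫ σ in (0:ℝ)..T, |P₁ σ - P₁ τ| :=
        integral_add_adjacent_intervals (hii _ _) (hii _ _)
      have b1 : (∫ σ in (0:ℝ)..τ, |P₁ σ - P₁ τ|) ≤ ∫ σ in (0:ℝ)..τ, M * (τ - σ) := by
        refine intervalIntegral.integral_mono_on h0 (hii _ _)
          ((continuous_const.mul (continuous_const.sub continuous_id)).intervalIntegrable _ _) ?_
        intro x hx
        rw [abs_sub_comm]
        exact hLip x τ hx.2
      have b2 : (∫ σ in τ..(τ + T/2), |P₁ σ - P₁ τ|) < ∫ σ in τ..(τ + T/2), M * (σ - τ) := by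
        refine integral_lt_integral_of_continuousOn_of_le_of_exists_lt (by linarith)
          hc.continuousOn
          ((continuous_const.mul (continuous_id.sub continuous_const)).continuousOn) ?_ ?_
        · intro x hx
          exact hLip τ x hx.1.le
        · exact ⟨τ + T/4, ⟨by linarith, by linarith⟩, hLipS τ (τ + T/4) (by linarith)⟩
      have b3 : (∫ σ in (τ + T/2)..T, |P₁ σ - P₁ τ|) ≤ ∫ σ in (τ + T/2)..T, M * ((τ + T) - σ) := by
        refine intervalIntegral.integral_mono_on (by linarith) (hii _ _)
          ((continuous_const.mul (continuous_const.sub continuous_id)).intervalIntegrable _ _) ?_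
        intro x hx
        rw [← hP₁per τ, abs_sub_comm]
        exact hLip x (τ + T) (by linarith [hx.2])
      have v1 := hlin τ 0 τ
      have v2 := hlin2 τ τ (τ + T/2)
      have v3 := hlin (τ + T) (τ + T/2) T
      have hfin : |P₂ T - T * P₁ τ| < M * τ^2/2 + (M * ((τ + T/2)^2 - τ^2)/2 - M * τ * (T/2))
          + (M * ((τ + T) * (T - (τ + T/2)) - (T^2 - (τ + T/2)^2)/2)) := by
        calc |P₂ T - T * P₁ τ| ≤ ∫ σ in (0:ℝ)..T, |P₁ σ - P₁ τ| := habs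
          _ = (∫ σ in (0:ℝ)..τ, |P₁ σ - P₁ τ|) + (∫ σ in τ..(τ + T/2), |P₁ σ - P₁ τ|)
              + (∫ σ in (τ + T/2)..T, |P₁ σ - P₁ τ|) := by rw [e1, e2]
          _ < _ := by
              rw [v1] at b1; rw [v2] at b2; rw [v3] at b3
              nlinarith [b1, b2, b3]
      nlinarith [hfin]
    · -- split at τ - T/2 and τ
      have e1 : (∫ σ in (0:ℝ)..(τ - T/2), |P₁ σ - P₁ τ|) + (∫ σ in (τ - T/2)..τ, |P₁ σ - P₁ τ|)
          = ∫ σ in (0:ℝ)..τ, |P₁ σ - P₁ τ| :=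
        integral_add_adjacent_intervals (hii _ _) (hii _ _)
      have e2 : (∫ σ in (0:ℝ)..τ, |P₁ σ - P₁ τ|) + (∫ σ in τ..T, |P₁ σ - P₁ τ|)
          = ∫ σ in (0:ℝ)..T, |P₁ σ - P₁ τ| :=
        integral_add_adjacent_intervals (hii _ _) (hii _ _)
      have b1 : (∫ σ in (0:ℝ)..(τ - T/2), |P₁ σ - P₁ τ|)
          ≤ ∫ σ in (0:ℝ)..(τ - T/2), M * (σ - (τ - T)) := by
        refine intervalIntegral.integral_mono_on (by linarith) (hii _ _)
          ((continuous_const.mul (continuous_id.sub continuous_const)).intervalIntegrable _ _) ?_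
        intro x hx
        have hx1 : P₁ x = P₁ (x + T) := (hP₁per x).symm
        rw [hx1]
        have := hLip τ (x + T) (by linarith [hx.1])
        calc |P₁ (x + T) - P₁ τ| ≤ M * (x + T - τ) := this
          _ = M * (x - (τ - T)) := by ring
      have b2 : (∫ σ in (τ - T/2)..τ, |P₁ σ - P₁ τ|) < ∫ σ in (τ - T/2)..τ, M * (τ - σ) := by
        refine integral_lt_integral_of_continuousOn_of_le_of_exists_lt (by linarith)
          hc.continuousOn
          ((continuous_const.mul (continuous_const.sub continuous_id)).continuousOn) ?_ ?_
        · intro x hx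
          rw [abs_sub_comm]
          exact hLip x τ hx.2
        · refine ⟨τ - T/4, ⟨by linarith, by linarith⟩, ?_⟩
          rw [abs_sub_comm]
          have := hLipS (τ - T/4) τ (by linarith)
          calc |P₁ τ - P₁ (τ - T/4)| < M * (τ - (τ - T/4)) := this
            _ = M * (τ - (τ - T/4)) := rfl
      have b3 : (∫ σ in τ..T, |P₁ σ - P₁ τ|) ≤ ∫ σ in τ..T, M * (σ - τ) := by
        refine intervalIntegral.integral_mono_on hτT.le (hii _ _)
          ((continuous_const.mul (continuous_id.sub continuous_const)).intervalIntegrable _ _) ?_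
        intro x hx
        exact hLip τ x hx.1
      have v1 := hlin2 (τ - T) 0 (τ - T/2)
      have v2 := hlin τ (τ - T/2) τ
      have v3 := hlin2 τ τ T
      have hfin : |P₂ T - T * P₁ τ| < M * (((τ - T/2)^2 - 0^2)/2 - (τ - T) * (τ - T/2 - 0))
          + M * (τ * (τ - (τ - T/2)) - (τ^2 - (τ - T/2)^2)/2)
          + M * ((T^2 - τ^2)/2 - τ * (T - τ)) := by
        calc |P₂ T - T * P₁ τ| ≤ ∫ σ in (0:ℝ)..T, |P₁ σ - P₁ τ| := habs
          _ = (∫ σ in (0:ℝ)..(τ - T/2), |P₁ σ - P₁ τ|) + (∫ σ in (τ - T/2)..τ, |P₁ σ - P₁ τ|)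
              + (∫ σ in τ..T, |P₁ σ - P₁ τ|) := by rw [e1, e2]
          _ < _ := by
              rw [v1] at b1; rw [v2] at b2; rw [v3] at b3
              nlinarith [b1, b2, b3]
      nlinarith [hfin]
  -- extend to all u by periodicity
  have hG : ∀ u : ℝ, |P₂ T - T * P₁ u| < M * T^2 / 4 := by
    intro u
    have h0 : 0 ≤ u - ⌊u / T⌋ * T := Int.sub_floor_div_mul_nonneg u hT
    have h1 : u - ⌊u / T⌋ * T < T := Int.sub_floor_div_mul_lt u hT
    have h2 := hGτ _ h0 h1
    rwa [hP₁per.sub_int_mul_eq] at h2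
  -- main argument
  intro φ₀ t ht0 htn
  set G : ℝ → ℝ := fun s => P₂ T - T * P₁ (s + φ₀) with hGdef
  have hGc : Continuous G := by rw [hGdef]; fun_prop
  have hP₂diff : ∀ a b : ℝ, P₂ b - P₂ a = ∫ s in a..b, P₁ s := by
    intro a b
    rw [hP₂, hP₂, integral_interval_sub_left (hP₁c.intervalIntegrable _ _)
      (hP₁c.intervalIntegrable _ _)]
  have hf : ∀ r : ℝ, (∫ s in (0:ℝ)..r, G s) = r * P₂ T + T * P₂ φ₀ - T * P₂ (r + φ₀) := by
    intro r
    have h1 : (∫ s in (0:ℝ)..r, P₁ (s + φ₀)) = P₂ (r + φ₀) - P₂ φ₀ := by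
      rw [intervalIntegral.integral_comp_add_right (fun s => P₁ s) φ₀, zero_add,
        ← hP₂diff φ₀ (r + φ₀)]
    have hI : IntervalIntegrable (fun s => T * P₁ (s + φ₀)) volume 0 r :=
      Continuous.intervalIntegrable (by fun_prop) _ _
    have h2 : (∫ s in (0:ℝ)..r, G s)
        = (∫ s in (0:ℝ)..r, P₂ T) - ∫ s in (0:ℝ)..r, T * P₁ (s + φ₀) := by
      rw [← intervalIntegral.integral_sub intervalIntegrable_const hI]
    rw [h2, intervalIntegral.integral_const_mul, h1, intervalIntegral.integral_const, smul_eq_mul]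
    ring
  have hfnT : (∫ s in (0:ℝ)..(n * T), G s) = 0 := by
    have hper2 : (∫ s in φ₀..(φ₀ + (n:ℤ) • T), P₁ s) = (n:ℤ) • ∫ s in φ₀..(φ₀ + T), P₁ s :=
      hP₁per.intervalIntegral_add_zsmul_eq (n:ℤ) φ₀ (fun a b => hP₁c.intervalIntegrable a b)
    have hper3 : (∫ s in φ₀..(φ₀ + T), P₁ s) = ∫ s in (0:ℝ)..(0 + T), P₁ s :=
      hP₁per.intervalIntegral_add_eq φ₀ 0
    have h4 : P₂ (n * T + φ₀) - P₂ φ₀ = (n : ℝ) * P₂ T := by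
      have e : ((n : ℝ) * T + φ₀ : ℝ) = φ₀ + (n:ℤ) • T := by
        rw [zsmul_eq_mul]; push_cast; ring
      rw [hP₂diff, e, hper2, hper3, zero_add, ← hP₂ T, zsmul_eq_mul]
      push_cast; ring
    rw [hf (n * T)]
    linear_combination -T * h4
  have habsG : ∀ a b : ℝ, a < b → |∫ s in a..b, G s| < M * T^2 / 4 * (b - a) := by
    intro a b hab
    have h1 : (∫ s in a..b, |G s|) < ∫ s in a..b, (M * T^2 / 4) :=
      integral_lt_integral_of_continuousOn_of_le_of_exists_lt hab hGc.abs.continuousOn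
        continuousOn_const (fun x _ => (hG _).le) ⟨a, Set.left_mem_Icc.mpr hab.le, hG _⟩
    calc |∫ s in a..b, G s| ≤ ∫ s in a..b, |G s| :=
          intervalIntegral.abs_integral_le_integral_abs hab.le
      _ < ∫ s in a..b, (M * T^2 / 4) := h1
      _ = M * T^2 / 4 * (b - a) := by
          rw [intervalIntegral.integral_const, smul_eq_mul]; ring
  have hsplit : (∫ s in (0:ℝ)..t, G s) + (∫ s in t..(n * T), G s) = 0 := by
    rw [integral_add_adjacent_intervals (hGc.intervalIntegrable _ _)
      (hGc.intervalIntegrable _ _), hfnT]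
  rw [← hf t]
  rcases le_or_gt t (n * T / 2) with hcase | hcase
  · have h1 := habsG 0 t ht0
    have hM0 : 0 ≤ M := by
      have h2 := hA 0 1 one_pos
      have h3 : (0:ℝ) ≤ ∫ s in (0:ℝ)..1, |p s| :=
        intervalIntegral.integral_nonneg (by norm_num) (fun u _ => abs_nonneg _)
      nlinarith
    nlinarith [mul_pos hT ht0, mul_nonneg (mul_nonneg hT.le ht0.le)
      (sub_nonneg.mpr hcase), mul_nonneg (sub_nonneg.mpr hn)
      (mul_nonneg (mul_nonneg hT.le hT.le) ht0.le)]
  · have h1 := habsG t (n * T) htn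
    have h2 : (∫ s in (0:ℝ)..t, G s) = -(∫ s in t..(n * T), G s) := by linarith
    rw [h2, abs_neg]
    have hM0 : 0 ≤ M := by
      have h2 := hA 0 1 one_pos
      have h3 : (0:ℝ) ≤ ∫ s in (0:ℝ)..1, |p s| :=
        intervalIntegral.integral_nonneg (by norm_num) (fun u _ => abs_nonneg _)
      nlinarith
    nlinarith [mul_pos hT (sub_pos.mpr htn), mul_nonneg (mul_nonneg hT.le (sub_pos.mpr htn).le)
      (sub_nonneg.mpr hcase.le), mul_nonneg (sub_nonneg.mpr hn)
      (mul_nonneg (mul_nonneg hT.le hT.le) (sub_pos.mpr htn).le)]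
end
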